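/- For every integer r ≥ 0 there exists a constant C > 0, depending only on r, with the following property. Let H be a finite-dimensional real inner product space, let m : H × H → ℝ be a symmetric bilinear form, and let 0 < μ_* ≤ μ^* satisfy μ_*‖v‖² ≤ m(v, v) ≤ μ^*‖v‖² for all v ∈ H. Let T > 0 and 0 = t_0 < ⋯ < t_N = T with τ := max_n (t_n − t_{n−1}). Fix an orthonormal basis (e_1, …, e_M) of H and let u be given on each closed subinterval [t_{n−1}, t_n] by u_n(t) = Σ_ℓ α_ℓ^{(n)}(t)·e_ℓ with each α_ℓ^{(n)} a polynomial of degree at most r. On each subinterval define Π(φ_T u)_n(t) := Σ_ℓ q_ℓ^{(n)}(t)·e_ℓ, where q_ℓ^{(n)} is the polynomial of degree at most r with ∫_{t_{n−1}}^{t_n} (φ_T·α_ℓ^{(n)} − q_ℓ^{(n)})·p dt = 0 for all polynomials p of degree at most r. For θ > 0 set v_n := Π(φ_T u)_n + θ·u_n. Define m^{∂t}(u, v) := Σ_{n=1}^N ∫_{t_{n−1}}^{t_n} m(u_n′(t), v_n(t)) dt − Σ_{n=1}^{N−1} m(u_n(t_n) − u_{n+1}(t_n), v_{n+1}(t_n))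 + m(u_1(0), v_1(0)), and |u|_J² := ½ ( ‖u_N(T)‖² + Σ_{n=1}^{N−1} ‖u_n(t_n) − u_{n+1}(t_n)‖² + ‖u_1(0)‖² ). Then m^{∂t}(u, v) ≥ μ_* ( (½ − (μ^*/μ_*)²·C·τ/(2θ)) Σ_{n=1}^N ∫_{t_{n−1}}^{t_n} ‖u_n(t)‖² dt + T·|u|_J² ). -/

import Mathlib

/-!
On a subinterval `[a, b]` the derivative `u'` has degree `≤ r`, so the projection may be dropped
from `∫ m(u', Π(φ_T u))`, and integrating `(φ_T + θ) m(u', u)` by parts with `φ_T' = -φ_T / T`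
leaves the endpoint energies `(φ_T + θ) m(u, u) / 2` and `∫ φ_T m(u, u) / (2T) ≥ μ_* ∫ ‖u‖² / 2`.
Summed over the partition, the endpoint energies combine with the upwind terms into
`(φ_T + θ) m(j, j) / 2 - m(j, η)` at every node, where `j` is the jump and
`η = Π(φ_T u)(a) - φ_T(a) u(a)` the projection error at the left end of the next interval.
Young's inequality absorbs `m(j, η)` into `θ μ_* ‖j‖² / 2`, and `‖η‖² ≤ C e² τ ∫ ‖u‖²` by the
inverse inequality `p(a)² ≤ C / (b - a) ∫ p²` for polynomials of degree `≤ r`, the best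
approximation property of the projection and the Lipschitz bound `|φ_T'| ≤ e` on `[0, ∞)`.
-/

open MeasureTheory Polynomial

lemma exists_pos_mul_norm_sq_le_of_homogeneous {E : Type*} [NormedAddCommGroup E]
    [NormedSpace ℝ E] [ProperSpace E] {f : E → ℝ} (hf : Continuous f)
    (hsmul : ∀ (t : ℝ) (x : E), f (t • x) = t ^ 2 * f x) (hpos : ∀ x ≠ 0, 0 < f x) :
    ∃ c > 0, ∀ x, c * ‖x‖ ^ 2 ≤ f x := by
  have hf0 : f 0 = 0 := by simpa using hsmul 0 0
  rcases subsingleton_or_nontrivial E with hE | hE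
  · exact ⟨1, one_pos, fun x => by simp [Subsingleton.elim x 0, hf0]⟩
  obtain ⟨x₀, hx₀, hmin⟩ := (isCompact_sphere (0 : E) 1).exists_isMinOn
    (NormedSpace.sphere_nonempty.mpr zero_le_one) hf.continuousOn
  have hx₀1 : ‖x₀‖ = 1 := by simpa using hx₀
  refine ⟨f x₀, hpos x₀ (norm_ne_zero_iff.mp (by simp [hx₀1])), fun x => ?_⟩
  rcases eq_or_ne x 0 with rfl | hx
  · simp [hf0]
  have hnx : ‖x‖ ≠ 0 := norm_ne_zero_iff.mpr hx
  have hunit : ‖x‖⁻¹ • x ∈ Metric.sphere (0 : E) 1 := by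
    simp [norm_smul, hnx]
  calc f x₀ * ‖x‖ ^ 2 ≤ f (‖x‖⁻¹ • x) * ‖x‖ ^ 2 := by gcongr; exact hmin hunit
    _ = f x := by rw [hsmul, ← mul_rotate, ← mul_pow, mul_inv_cancel₀ hnx, one_pow, one_mul]

lemma Polynomial.integral_sq_eval_pos {p : ℝ[X]} (hp : p ≠ 0) {a b : ℝ} (hab : a < b) :
    0 < ∫ x in a..b, p.eval x ^ 2 := by
  rw [intervalIntegral.integral_pos_iff_support_of_nonneg_ae
    (Filter.Eventually.of_forall fun x => sq_nonneg _)
    ((p.continuous.pow 2).intervalIntegrable a b)]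
  refine ⟨hab, ?_⟩
  have hroots : volume {x : ℝ | p.IsRoot x} = 0 := (p.finite_setOfPred_isRoot hp).measure_zero _
  calc (0 : ENNReal) < volume (Set.Ioc a b \ {x | p.IsRoot x}) := by
        rw [measure_sdiff_null hroots]; simp [hab]
    _ ≤ volume (Function.support (fun x => p.eval x ^ 2) ∩ Set.Ioc a b) :=
        measure_mono fun x hx => ⟨pow_ne_zero 2 hx.2, hx.1⟩

lemma Polynomial.exists_sq_eval_zero_le_integral (r : ℕ) :
    ∃ K > 0, ∀ w : ℝ[X], w.natDegree ≤ r → w.eval 0 ^ 2 ≤ K * ∫ x in (0 : ℝ)..1, w.eval x ^ 2 := by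
  -- `f c` is `∫₀¹ p²` for the polynomial `p` with coefficient vector `c`
  set f : (Fin (r + 1) → ℝ) → ℝ := fun c => ∫ x in (0 : ℝ)..1, (∑ i, c i * x ^ (i : ℕ)) ^ 2
  have hf : Continuous f :=
    intervalIntegral.continuous_parametric_intervalIntegral_of_continuous' (by fun_prop) 0 1
  have hsmul : ∀ (t : ℝ) c, f (t • c) = t ^ 2 * f c := fun t c => by
    simp only [f, Pi.smul_apply, smul_eq_mul, mul_assoc, ← Finset.mul_sum, mul_pow,
      intervalIntegral.integral_const_mul]
  have hpos : ∀ c ≠ 0, 0 < f c := fun c hc => by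
    set w := (degreeLTEquiv ℝ (r + 1)).symm c
    have hw : (w : ℝ[X]) ≠ 0 := by simpa [w] using hc
    simpa [f, eval_eq_sum_degreeLTEquiv w.2, w] using integral_sq_eval_pos hw zero_lt_one
  obtain ⟨c, hc, hcf⟩ := exists_pos_mul_norm_sq_le_of_homogeneous hf hsmul hpos
  refine ⟨c⁻¹, inv_pos.mpr hc, fun w hw => ?_⟩
  have hmem : w ∈ degreeLT ℝ (r + 1) := by
    rw [degreeLT_succ_eq_degreeLE, mem_degreeLE]; exact natDegree_le_iff_degree_le.mp hw
  set v := degreeLTEquiv ℝ (r + 1) ⟨w, hmem⟩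
  have heval : ∀ x, w.eval x = ∑ i, v i * x ^ (i : ℕ) := eval_eq_sum_degreeLTEquiv hmem
  have hv0 : w.eval 0 ^ 2 ≤ ‖v‖ ^ 2 := by
    have hv : v 0 = w.eval 0 := coeff_zero_eq_eval_zero w
    rw [← hv, ← sq_abs, ← Real.norm_eq_abs]
    exact pow_le_pow_left₀ (norm_nonneg _) (norm_le_pi_norm v 0) 2
  calc w.eval 0 ^ 2 ≤ c⁻¹ * (c * ‖v‖ ^ 2) := by rwa [inv_mul_cancel_left₀ hc.ne']
    _ ≤ c⁻¹ * f v := by gcongr; exact hcf v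
    _ = c⁻¹ * ∫ x in (0 : ℝ)..1, w.eval x ^ 2 := by simp only [f, heval]

lemma Polynomial.exists_sq_eval_le_integral (r : ℕ) :
    ∃ K > 0, ∀ w : ℝ[X], w.natDegree ≤ r → ∀ a b : ℝ, a < b →
      w.eval a ^ 2 ≤ K / (b - a) * ∫ x in a..b, w.eval x ^ 2 := by
  obtain ⟨K, hK, hunit⟩ := exists_sq_eval_zero_le_integral r
  refine ⟨K, hK, fun w hw a b hab => ?_⟩
  have hba : b - a ≠ 0 := (sub_pos.mpr hab).ne'
  set z := w.comp (C (b - a) * X + C a)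
  have hz : z.natDegree ≤ r :=
    natDegree_comp_le.trans ((Nat.mul_le_mul hw natDegree_linear_le).trans_eq (mul_one r))
  have hzeval : ∀ x, z.eval x = w.eval ((b - a) * x + a) := fun x => by
    simp only [z, eval_comp, eval_add, eval_mul, eval_C, eval_X]
  have hzint : ∫ x in (0 : ℝ)..1, z.eval x ^ 2 = (b - a)⁻¹ * ∫ x in a..b, w.eval x ^ 2 := by
    simp only [hzeval]
    rw [intervalIntegral.integral_comp_mul_add (fun x => w.eval x ^ 2) hba]
    simp
  have h := hunit z hz
  rw [hzint, hzeval, mul_zero, zero_add] at h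
  rwa [div_eq_mul_inv, mul_assoc]

-- The weight `φ_T`; the hypotheses of the theorem mention it unfolded.
noncomputable def expWeight (T s : ℝ) : ℝ := T * Real.exp ((T - s) / T)

@[fun_prop]
lemma continuous_expWeight (T : ℝ) : Continuous (expWeight T) := by
  unfold expWeight; fun_prop

lemma hasDerivAt_expWeight (T s : ℝ) : HasDerivAt (expWeight T) (-expWeight T s / T) s :=
  ((((hasDerivAt_id s).const_sub T).div_const T).exp.const_mul T).congr_deriv
    (by simp only [expWeight, id]; ring)

lemma expWeight_self (T : ℝ) : expWeight T T = T := by simp [expWeight]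

lemma le_expWeight {T s : ℝ} (hT : 0 < T) (hs : s ≤ T) : T ≤ expWeight T s :=
  le_mul_of_one_le_right hT.le (Real.one_le_exp (div_nonneg (sub_nonneg.mpr hs) hT.le))

lemma abs_expWeight_sub_le {T a s : ℝ} (hT : 0 < T) (ha : 0 ≤ a) (hs : 0 ≤ s) :
    |expWeight T s - expWeight T a| ≤ Real.exp 1 * |s - a| := by
  have hderiv : ∀ x ∈ Set.Ici (0 : ℝ),
      HasDerivWithinAt (expWeight T) (-expWeight T x / T) (Set.Ici 0) x :=
    fun x _ => (hasDerivAt_expWeight T x).hasDerivWithinAt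
  have hbound : ∀ x ∈ Set.Ici (0 : ℝ), ‖-expWeight T x / T‖ ≤ Real.exp 1 := fun x hx => by
    rw [norm_div, norm_neg, Real.norm_of_nonneg (by unfold expWeight; positivity),
      Real.norm_of_nonneg hT.le, expWeight, mul_div_cancel_left₀ _ hT.ne']
    exact Real.exp_le_exp.mpr ((div_le_one hT).mpr (by linarith [Set.mem_Ici.mp hx]))
  exact (convex_Ici 0).norm_image_sub_le_of_norm_hasDerivWithin_le hderiv hbound ha hs

lemma intervalIntegral.integral_sq_le_of_integral_sub_mul_eq_zero {f g : ℝ → ℝ} {a b : ℝ}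
    (hab : a ≤ b) (hf : Continuous f) (hg : Continuous g)
    (horth : ∫ x in a..b, (f x - g x) * g x = 0) :
    ∫ x in a..b, g x ^ 2 ≤ ∫ x in a..b, f x ^ 2 := by
  have hsplit : ∫ x in a..b, f x ^ 2
      = (∫ x in a..b, g x ^ 2) + (∫ x in a..b, (f x - g x) ^ 2)
        + 2 * ∫ x in a..b, (f x - g x) * g x := by
    rw [← intervalIntegral.integral_const_mul, ← intervalIntegral.integral_add,
      ← intervalIntegral.integral_add]
    · congr 1; ext x; ring
    all_goals exact Continuous.intervalIntegrable (by fun_prop) _ _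
  have hnonneg : 0 ≤ ∫ x in a..b, (f x - g x) ^ 2 :=
    intervalIntegral.integral_nonneg hab fun x _ => sq_nonneg _
  linarith

section Bilinear

variable {H : Type*} [NormedAddCommGroup H] [NormedSpace ℝ H] [FiniteDimensional ℝ H]
  (m : H →ₗ[ℝ] H →ₗ[ℝ] ℝ)

lemma LinearMap.continuous_apply₂ {X : Type*} [TopologicalSpace X] {f g : X → H}
    (hf : Continuous f) (hg : Continuous g) : Continuous fun x => m (f x) (g x) :=
  m.toContinuousBilinearMap.continuous₂.comp (hf.prodMk hg)

lemma LinearMap.hasDerivAt_apply₂ {f g : ℝ → H} {f' g' : H} {s : ℝ} (hf : HasDerivAt f f' s)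
    (hg : HasDerivAt g g' s) :
    HasDerivAt (fun x => m (f x) (g x)) (m f' (g s) + m (f s) g') s := by
  rw [add_comm]
  exact m.toContinuousBilinearMap.hasDerivAt_of_bilinear (fun _ => hf) (fun _ => hg)

lemma LinearMap.integral_mul_apply₂_deriv_self (hsym : ∀ x y, m x y = m y x)
    {w w' : ℝ → ℝ} {U U' : ℝ → H} (hw : ∀ s, HasDerivAt w (w' s) s) (hw' : Continuous w')
    (hU : ∀ s, HasDerivAt U (U' s) s) (hU' : Continuous U') (a b : ℝ) :
    ∫ s in a..b, w s * m (U' s) (U s)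
      = (w b * m (U b) (U b) - w a * m (U a) (U a)) / 2
        - (∫ s in a..b, w' s * m (U s) (U s)) / 2 := by
  have hwc : Continuous w := continuous_iff_continuousAt.mpr fun s => (hw s).continuousAt
  have hUc : Continuous U := continuous_iff_continuousAt.mpr fun s => (hU s).continuousAt
  have hmU'U : IntervalIntegrable (fun s => w s * m (U' s) (U s)) volume a b :=
    (hwc.mul (m.continuous_apply₂ hU' hUc)).intervalIntegrable a b
  have hmUU : IntervalIntegrable (fun s => w' s * m (U s) (U s) / 2) volume a b :=
    ((hw'.mul (m.continuous_apply₂ hUc hUc)).div_const 2).intervalIntegrable a b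
  have hderiv : ∀ s, HasDerivAt (fun x => w x * m (U x) (U x) / 2)
      (w s * m (U' s) (U s) + w' s * m (U s) (U s) / 2) s := fun s =>
    ((hw s).mul (m.hasDerivAt_apply₂ (hU s) (hU s))).div_const 2 |>.congr_deriv (by
      rw [hsym (U s) (U' s)]; ring)
  have hftc := intervalIntegral.integral_eq_sub_of_hasDerivAt (fun s _ => hderiv s)
    (hmU'U.add hmUU)
  rw [intervalIntegral.integral_add hmU'U hmUU, intervalIntegral.integral_div] at hftc
  linarith

end Bilinear

section PolyCurve

variable {H : Type*} {ι : Type*} [Fintype ι]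

noncomputable def polyCurve [AddCommGroup H] [Module ℝ H] (e : ι → H) (α : ι → ℝ[X]) (s : ℝ) :
    H :=
  ∑ ℓ, (α ℓ).eval s • e ℓ

variable [NormedAddCommGroup H] [NormedSpace ℝ H]

lemma continuous_polyCurve (e : ι → H) (α : ι → ℝ[X]) : Continuous (polyCurve e α) := by
  unfold polyCurve; fun_prop

lemma hasDerivAt_polyCurve (e : ι → H) (α : ι → ℝ[X]) (s : ℝ) :
    HasDerivAt (polyCurve e α) (polyCurve e (fun ℓ => derivative (α ℓ)) s) s :=
  HasDerivAt.fun_sum fun ℓ _ => ((α ℓ).hasDerivAt s).smul_const (e ℓ)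

end PolyCurve

lemma OrthonormalBasis.norm_sum_smul_sq {H ι : Type*} [Fintype ι] [NormedAddCommGroup H]
    [InnerProductSpace ℝ H] (e : OrthonormalBasis ι ℝ H) (c : ι → ℝ) :
    ‖∑ ℓ, c ℓ • e ℓ‖ ^ 2 = ∑ ℓ, c ℓ ^ 2 := by
  rw [show ∑ ℓ, c ℓ • e ℓ = e.repr.symm (WithLp.toLp 2 c) from e.sum_repr_symm _,
    LinearIsometryEquiv.norm_map, EuclideanSpace.real_norm_sq_eq]

lemma LinearMap.integral_apply₂_polyCurve_eq_zero {H ι : Type*} [Fintype ι] [AddCommGroup H]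
    [Module ℝ H] (m : H →ₗ[ℝ] H →ₗ[ℝ] ℝ) (e : ι → H) {r : ℕ} {β : ι → ℝ[X]}
    (hβ : ∀ ℓ, (β ℓ).natDegree ≤ r) {g : ι → ℝ → ℝ} (hg : ∀ k, Continuous (g k)) {a b : ℝ}
    (horth : ∀ k (p : ℝ[X]), p.natDegree ≤ r → ∫ s in a..b, g k s * p.eval s = 0) :
    ∫ s in a..b, m (polyCurve e β s) (∑ k, g k s • e k) = 0 := by
  set p : ι → ℝ[X] := fun k => ∑ ℓ, C (m (e ℓ) (e k)) * β ℓ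
  have hp : ∀ k, (p k).natDegree ≤ r := fun k =>
    natDegree_sum_le_of_forall_le _ _ fun ℓ _ => (natDegree_C_mul_le _ _).trans (hβ ℓ)
  have hexpand : ∀ s, m (polyCurve e β s) (∑ k, g k s • e k) = ∑ k, g k s * (p k).eval s :=
    fun s => by
      simp only [polyCurve, p, map_sum, map_smul, LinearMap.coe_sum, Finset.sum_apply,
        LinearMap.smul_apply, smul_eq_mul, eval_finsetSum, eval_mul, eval_C, Finset.mul_sum]
      exact Finset.sum_congr rfl fun k _ => Finset.sum_congr rfl fun ℓ _ => by ring
  simp only [hexpand]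
  rw [intervalIntegral.integral_finsetSum (f := fun k s => g k s * (p k).eval s) fun k _ =>
    ((hg k).mul (p k).continuous).intervalIntegrable a b]
  exact Finset.sum_eq_zero fun k _ => horth k (p k) (hp k)

section Interval

variable {H ι : Type*} [Fintype ι] [NormedAddCommGroup H] [NormedSpace ℝ H]
  [FiniteDimensional ℝ H] (m : H →ₗ[ℝ] H →ₗ[ℝ] ℝ) (e : ι → H)

lemma LinearMap.integral_apply₂_deriv_projection_add_smul (hsym : ∀ x y, m x y = m y x)
    {r : ℕ} {T θ a b : ℝ} {α q : ι → ℝ[X]} (hα : ∀ ℓ, (α ℓ).natDegree ≤ r)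
    (horth : ∀ ℓ (p : ℝ[X]), p.natDegree ≤ r →
      ∫ s in a..b, (expWeight T s * (α ℓ).eval s - (q ℓ).eval s) * p.eval s = 0)
    {U U' V : ℝ → H} (hU : ∀ s, U s = ∑ ℓ, (α ℓ).eval s • e ℓ)
    (hU' : ∀ s, U' s = ∑ ℓ, (derivative (α ℓ)).eval s • e ℓ)
    (hV : ∀ s, V s = ∑ ℓ, (q ℓ).eval s • e ℓ + θ • U s) :
    ∫ s in a..b, m (U' s) (V s)
      = (expWeight T b + θ) * m (U b) (U b) / 2 - (expWeight T a + θ) * m (U a) (U a) / 2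
        + ∫ s in a..b, expWeight T s / (2 * T) * m (U s) (U s) := by
  obtain rfl : U = polyCurve e α := funext hU
  obtain rfl : U' = polyCurve e fun ℓ => derivative (α ℓ) := funext hU'
  obtain rfl : V = fun s => polyCurve e q s + θ • polyCurve e α s := funext hV
  have hUc := continuous_polyCurve e α
  have hU'c := continuous_polyCurve e fun ℓ => derivative (α ℓ)
  have herror : ∀ s, ∑ k, (expWeight T s * (α k).eval s - (q k).eval s) • e k
      = expWeight T s • polyCurve e α s - polyCurve e q s := fun s => by
    simp only [polyCurve, sub_smul, Finset.sum_sub_distrib, Finset.smul_sum, smul_smul]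
  have hsplit : ∀ s, m (polyCurve e (fun ℓ => derivative (α ℓ)) s)
        (polyCurve e q s + θ • polyCurve e α s)
      = (expWeight T s + θ) * m (polyCurve e (fun ℓ => derivative (α ℓ)) s) (polyCurve e α s)
        - m (polyCurve e (fun ℓ => derivative (α ℓ)) s)
            (∑ k, (expWeight T s * (α k).eval s - (q k).eval s) • e k) := fun s => by
    rw [herror]
    simp only [map_add, map_sub, map_smul, smul_eq_mul]
    ring
  -- `U'` has degree `≤ r`, so it does not see the projection error
  have hprojection := m.integral_apply₂_polyCurve_eq_zero e
    (fun ℓ => (natDegree_derivative_le (α ℓ)).trans ((Nat.sub_le _ 1).trans (hα ℓ)))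
    (fun k => by fun_prop) horth
  have hftc := m.integral_mul_apply₂_deriv_self hsym
    (fun s => (hasDerivAt_expWeight T s).add_const θ) (by fun_prop)
    (hasDerivAt_polyCurve e α) hU'c a b
  have hweight : ∀ s, expWeight T s / (2 * T) * m (polyCurve e α s) (polyCurve e α s)
      = -(-expWeight T s / T * m (polyCurve e α s) (polyCurve e α s)) / 2 := fun s => by ring
  simp only [hsplit, hweight, intervalIntegral.integral_div, intervalIntegral.integral_neg]
  rw [intervalIntegral.integral_sub, hprojection, sub_zero, hftc]
  · ring
  · exact (((continuous_expWeight T).add continuous_const).mul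
      (m.continuous_apply₂ hU'c hUc)).intervalIntegrable a b
  · exact (m.continuous_apply₂ hU'c (by fun_prop)).intervalIntegrable a b

end Interval

lemma sq_eval_sub_expWeight_mul_le {r : ℕ} {K T a b : ℝ}
    (hinv : ∀ w : ℝ[X], w.natDegree ≤ r → w.eval a ^ 2 ≤ K / (b - a) * ∫ x in a..b, w.eval x ^ 2)
    (hK : 0 ≤ K) (hT : 0 < T) (ha : 0 ≤ a) (hab : a < b) {α q : ℝ[X]} (hα : α.natDegree ≤ r)
    (hq : q.natDegree ≤ r)
    (horth : ∀ p : ℝ[X], p.natDegree ≤ r →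
      ∫ s in a..b, (expWeight T s * α.eval s - q.eval s) * p.eval s = 0) :
    (q.eval a - expWeight T a * α.eval a) ^ 2
      ≤ K * Real.exp 1 ^ 2 * (b - a) * ∫ s in a..b, α.eval s ^ 2 := by
  set d := q - C (expWeight T a) * α
  have hd : d.natDegree ≤ r :=
    (natDegree_sub_le _ _).trans (max_le hq ((natDegree_C_mul_le _ _).trans hα))
  -- `q` is the best approximation of `φ_T α`, in particular better than `φ_T(a) α`
  have hdeval : ∀ s, d.eval s = q.eval s - expWeight T a * α.eval s := by simp [d]
  have hbest : ∫ s in a..b, d.eval s ^ 2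
      ≤ ∫ s in a..b, ((expWeight T s - expWeight T a) * α.eval s) ^ 2 := by
    refine intervalIntegral.integral_sq_le_of_integral_sub_mul_eq_zero hab.le (by fun_prop)
      d.continuous ?_
    rw [← horth d hd]
    exact intervalIntegral.integral_congr fun s _ => by simp only [hdeval]; ring
  have hlip : ∫ s in a..b, ((expWeight T s - expWeight T a) * α.eval s) ^ 2
      ≤ ∫ s in a..b, Real.exp 1 ^ 2 * (b - a) ^ 2 * α.eval s ^ 2 := by
    refine intervalIntegral.integral_mono_on hab.le
      (Continuous.intervalIntegrable (by fun_prop) _ _)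
      (Continuous.intervalIntegrable (by fun_prop) _ _) fun s hs => ?_
    have h := abs_expWeight_sub_le hT ha (ha.trans hs.1)
    rw [abs_of_nonneg (sub_nonneg.mpr hs.1)] at h
    rw [mul_pow]
    gcongr
    calc (expWeight T s - expWeight T a) ^ 2 = |expWeight T s - expWeight T a| ^ 2 :=
          (sq_abs _).symm
      _ ≤ (Real.exp 1 * (s - a)) ^ 2 := by gcongr
      _ ≤ Real.exp 1 ^ 2 * (b - a) ^ 2 := by
          rw [mul_pow]; gcongr <;> linarith [hs.1, hs.2]
  have hba : 0 < b - a := sub_pos.mpr hab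
  calc (q.eval a - expWeight T a * α.eval a) ^ 2 = d.eval a ^ 2 := by rw [hdeval]
    _ ≤ K / (b - a) * ∫ s in a..b, d.eval s ^ 2 := hinv d hd
    _ ≤ K / (b - a) * ∫ s in a..b, Real.exp 1 ^ 2 * (b - a) ^ 2 * α.eval s ^ 2 := by
        gcongr; exact hbest.trans hlip
    _ = K * Real.exp 1 ^ 2 * (b - a) * ∫ s in a..b, α.eval s ^ 2 := by
        rw [intervalIntegral.integral_const_mul]; field_simp

section Estimates

variable {H ι : Type*} [Fintype ι] [NormedAddCommGroup H] [InnerProductSpace ℝ H]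

lemma norm_sub_expWeight_add_smul_sq_le (e : OrthonormalBasis ι ℝ H) {r : ℕ} {K T θ a b : ℝ}
    (hinv : ∀ w : ℝ[X], w.natDegree ≤ r → w.eval a ^ 2 ≤ K / (b - a) * ∫ x in a..b, w.eval x ^ 2)
    (hK : 0 ≤ K) (hT : 0 < T) (ha : 0 ≤ a) (hab : a < b) {τ : ℝ} (hτ : b - a ≤ τ)
    {α q : ι → ℝ[X]} (hα : ∀ ℓ, (α ℓ).natDegree ≤ r) (hq : ∀ ℓ, (q ℓ).natDegree ≤ r)
    (horth : ∀ ℓ (p : ℝ[X]), p.natDegree ≤ r →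
      ∫ s in a..b, (expWeight T s * (α ℓ).eval s - (q ℓ).eval s) * p.eval s = 0)
    {U V : ℝ → H} (hU : ∀ s, U s = ∑ ℓ, (α ℓ).eval s • e ℓ)
    (hV : ∀ s, V s = ∑ ℓ, (q ℓ).eval s • e ℓ + θ • U s) :
    ‖V a - (expWeight T a + θ) • U a‖ ^ 2 ≤ K * Real.exp 1 ^ 2 * τ * ∫ s in a..b, ‖U s‖ ^ 2 := by
  have hdiff : V a - (expWeight T a + θ) • U a
      = ∑ ℓ, ((q ℓ).eval a - expWeight T a * (α ℓ).eval a) • e ℓ := by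
    simp only [hV, hU, sub_smul, add_smul, mul_smul, Finset.sum_sub_distrib, ← Finset.smul_sum]
    abel
  have hnorm : ∫ s in a..b, ‖U s‖ ^ 2 = ∑ ℓ, ∫ s in a..b, (α ℓ).eval s ^ 2 := by
    simp only [hU, e.norm_sum_smul_sq]
    exact intervalIntegral.integral_finsetSum fun ℓ _ =>
      ((α ℓ).continuous.pow 2).intervalIntegrable a b
  have hτ' : K * Real.exp 1 ^ 2 * (b - a) * ∫ s in a..b, ‖U s‖ ^ 2
      ≤ K * Real.exp 1 ^ 2 * τ * ∫ s in a..b, ‖U s‖ ^ 2 := by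
    gcongr
    exact intervalIntegral.integral_nonneg hab.le fun s _ => sq_nonneg _
  refine le_trans ?_ hτ'
  rw [hdiff, e.norm_sum_smul_sq, hnorm, Finset.mul_sum]
  exact Finset.sum_le_sum fun ℓ _ =>
    sq_eval_sub_expWeight_mul_le hinv hK hT ha hab (hα ℓ) (hq ℓ) (horth ℓ)

end Estimates

section FormBounds

variable {H : Type*} [NormedAddCommGroup H] [NormedSpace ℝ H] (m : H →ₗ[ℝ] H →ₗ[ℝ] ℝ)
  {μs μb : ℝ}

lemma LinearMap.integral_norm_sq_le_integral_expWeight_div_mul [FiniteDimensional ℝ H]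
    (hμs : 0 ≤ μs) (hm : ∀ x, μs * ‖x‖ ^ 2 ≤ m x x) {T a b : ℝ} (hT : 0 < T) (hab : a ≤ b)
    (hbT : b ≤ T) {U : ℝ → H} (hU : Continuous U) :
    μs / 2 * ∫ s in a..b, ‖U s‖ ^ 2 ≤ ∫ s in a..b, expWeight T s / (2 * T) * m (U s) (U s) := by
  rw [← intervalIntegral.integral_const_mul]
  refine intervalIntegral.integral_mono_on (f := fun s => μs / 2 * ‖U s‖ ^ 2) hab
    ((continuous_const.mul (hU.norm.pow 2)).intervalIntegrable a b)
    ((((continuous_expWeight T).div_const _).mul (m.continuous_apply₂ hU hU)).intervalIntegrable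
      a b) fun s hs => ?_
  have hweight : 1 ≤ expWeight T s / T := (one_le_div hT).mpr (le_expWeight hT (hs.2.trans hbT))
  have hmpos : 0 ≤ m (U s) (U s) := (mul_nonneg hμs (sq_nonneg _)).trans (hm (U s))
  calc μs / 2 * ‖U s‖ ^ 2 ≤ m (U s) (U s) / 2 := by linarith [hm (U s)]
    _ ≤ expWeight T s / T * m (U s) (U s) / 2 := by
        gcongr; exact le_mul_of_one_le_left hmpos hweight
    _ = expWeight T s / (2 * T) * m (U s) (U s) := by ring

lemma LinearMap.abs_apply₂_le (hsym : ∀ x y, m x y = m y x) (hμb : 0 ≤ μb)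
    (hpos : ∀ x, 0 ≤ m x x) (hle : ∀ x, m x x ≤ μb * ‖x‖ ^ 2) (x y : H) :
    |m x y| ≤ μb * ‖x‖ * ‖y‖ := by
  refine abs_le_of_sq_le_sq ?_ (by positivity)
  calc m x y ^ 2 ≤ m x x * m y y :=
        LinearMap.BilinForm.apply_sq_le_of_symm m hpos (LinearMap.isSymm_def.mpr hsym) x y
    _ ≤ (μb * ‖x‖ ^ 2) * (μb * ‖y‖ ^ 2) :=
        mul_le_mul (hle x) (hle y) (hpos y) ((hpos x).trans (hle x))
    _ = (μb * ‖x‖ * ‖y‖) ^ 2 := by ring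

lemma LinearMap.upwind_jump_lower_bound (hsym : ∀ x y, m x y = m y x) (hμs : 0 < μs)
    (hμsb : μs ≤ μb) (hm : ∀ x, μs * ‖x‖ ^ 2 ≤ m x x ∧ m x x ≤ μb * ‖x‖ ^ 2) {θ κ γ : ℝ} (hθ : 0 < θ)
    (hκ : 0 ≤ κ) (hγ : κ + θ ≤ γ) (x y w : H) :
    μs * κ / 2 * ‖x - y‖ ^ 2 - μb ^ 2 / (2 * θ * μs) * ‖w - γ • y‖ ^ 2
      ≤ γ * m x x / 2 - γ * m y y / 2 - m (x - y) w := by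
  set j := x - y
  set η := w - γ • y
  have hsplit : γ * m x x / 2 - γ * m y y / 2 - m j w = γ * m j j / 2 - m j η := by
    simp only [j, η, map_sub, map_smul, LinearMap.sub_apply, smul_eq_mul, hsym y x]
    ring
  have hpos : ∀ x, 0 ≤ m x x := fun x => (by positivity : 0 ≤ μs * ‖x‖ ^ 2).trans (hm x).1
  have hcs := m.abs_apply₂_le hsym (hμs.le.trans hμsb) hpos (fun x => (hm x).2) j η
  have hyoung : μb * ‖j‖ * ‖η‖
      ≤ θ * μs / 2 * ‖j‖ ^ 2 + μb ^ 2 / (2 * θ * μs) * ‖η‖ ^ 2 := by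
    have hsq : θ * μs / 2 * ‖j‖ ^ 2 + μb ^ 2 / (2 * θ * μs) * ‖η‖ ^ 2 - μb * ‖j‖ * ‖η‖
        = (θ * μs * ‖j‖ - μb * ‖η‖) ^ 2 / (2 * θ * μs) := by
      field_simp; ring
    have : 0 ≤ (θ * μs * ‖j‖ - μb * ‖η‖) ^ 2 / (2 * θ * μs) := by positivity
    linarith
  have hjj : (κ + θ) * (μs * ‖j‖ ^ 2) ≤ γ * m j j :=
    mul_le_mul hγ (hm j).1 (by positivity) (by linarith)
  rw [hsplit]
  nlinarith [le_abs_self (m j η)]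

end FormBounds

section Sums

open Finset

variable {A : Type*} [AddCommMonoid A]

lemma Finset.sum_Icc_one_eq_sum_Icc_pred_add {N : ℕ} (hN : 1 ≤ N) (f : ℕ → A) :
    ∑ n ∈ Icc 1 N, f n = ∑ n ∈ Icc 1 (N - 1), f n + f N := by
  obtain ⟨K, rfl⟩ : ∃ K, N = K + 1 := ⟨N - 1, by omega⟩
  rw [sum_Icc_succ_top (by omega), Nat.add_sub_cancel]

lemma Finset.sum_Icc_one_eq_add_sum_Icc_pred_succ {N : ℕ} (hN : 1 ≤ N) (f : ℕ → A) :
    ∑ n ∈ Icc 1 N, f n = f 1 + ∑ n ∈ Icc 1 (N - 1), f (n + 1) := by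
  induction N with
  | zero => omega
  | succ K ih =>
    rcases Nat.eq_zero_or_pos K with rfl | hK
    · simp
    rw [sum_Icc_succ_top (by omega), ih hK, Nat.add_sub_cancel, add_assoc,
      ← sum_Icc_one_eq_sum_Icc_pred_add hK (fun n => f (n + 1))]

lemma upwind_sum_lower_bound {N : ℕ} (hN : 1 ≤ N) {A B E F G X Z J : ℕ → ℝ}
    {init jumpInit jumpFinal c κ lam μ : ℝ} (hκ : 0 ≤ κ)
    (hA : ∀ n ∈ Icc 1 N, A n = E n - F n + G n)
    (hG : ∀ n ∈ Icc 1 N, μ * X n ≤ G n)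
    (hZ : ∀ n ∈ Icc 1 N, Z n ≤ lam * X n)
    (hnode : ∀ n ∈ Icc 1 (N - 1), c * J n - κ * Z (n + 1) ≤ E n - F (n + 1) - B n)
    (hinit : c * jumpInit - κ * Z 1 ≤ init - F 1) (hfinal : c * jumpFinal ≤ E N) :
    (μ - κ * lam) * ∑ n ∈ Icc 1 N, X n + c * (jumpFinal + ∑ n ∈ Icc 1 (N - 1), J n + jumpInit)
      ≤ ∑ n ∈ Icc 1 N, A n - ∑ n ∈ Icc 1 (N - 1), B n + init := by
  have htelescope : ∑ n ∈ Icc 1 N, A n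
      = ∑ n ∈ Icc 1 (N - 1), (E n - F (n + 1)) + E N - F 1 + ∑ n ∈ Icc 1 N, G n := by
    rw [sum_congr rfl hA, sum_add_distrib, sum_sub_distrib, sum_sub_distrib,
      sum_Icc_one_eq_sum_Icc_pred_add hN E, sum_Icc_one_eq_add_sum_Icc_pred_succ hN F]
    ring
  have hnodes := sum_le_sum hnode
  have hGs := sum_le_sum hG
  have hZs := mul_le_mul_of_nonneg_left (sum_le_sum hZ) hκ
  rw [sum_Icc_one_eq_add_sum_Icc_pred_succ hN Z] at hZs
  simp only [sum_sub_distrib, ← mul_sum] at hnodes hGs hZs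
  rw [htelescope, sum_sub_distrib]
  linarith

end Sums

lemma partition_bounds {t : ℕ → ℝ} {N : ℕ} (ht : ∀ n < N, t n < t (n + 1)) {n : ℕ}
    (hn : n ∈ Finset.Icc 1 N) : t 0 ≤ t (n - 1) ∧ t (n - 1) < t n ∧ t n ≤ t N := by
  obtain ⟨hn1, hnN⟩ := Finset.mem_Icc.mp hn
  have hmono : StrictMonoOn t (Set.Iic N) :=
    strictMonoOn_Iic_of_lt_succ fun k hk => by simpa using ht k hk
  have hmem : ∀ k ≤ N, k ∈ Set.Iic N := fun k hk => hk
  exact ⟨hmono.monotoneOn (hmem 0 (by omega)) (hmem _ (by omega)) (Nat.zero_le _),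
    hmono (hmem _ (by omega)) (hmem _ hnN) (by omega),
    hmono.monotoneOn (hmem _ hnN) (hmem _ le_rfl) hnN⟩

universe u

/-- Lower bound for the upwind discontinuous Galerkin time-derivative form `m^{∂t}`
associated with a discrete inner product `m`, tested with the nonstandard test
function `v = Π_r(φ_T u) + θ u`, yielding `L²`-in-time and jump control.  The
constant `C` depends only on the polynomial degree `r` in time. -/
theorem dg_mass_form_lower_bound (r : ℕ) :
    ∃ C : ℝ, 0 < C ∧
      ∀ (H : Type u) [NormedAddCommGroup H] [InnerProductSpace ℝ H]
        [FiniteDimensional ℝ H],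
      ∀ (m : H →ₗ[ℝ] H →ₗ[ℝ] ℝ), (∀ x y : H, m x y = m y x) →
      ∀ μs μb : ℝ, 0 < μs → μs ≤ μb →
        (∀ x : H, μs * ‖x‖ ^ 2 ≤ m x x ∧ m x x ≤ μb * ‖x‖ ^ 2) →
      ∀ (T : ℝ), 0 < T → ∀ (N : ℕ), 1 ≤ N → ∀ t : ℕ → ℝ,
        t 0 = 0 → t N = T → (∀ n < N, t n < t (n + 1)) →
      ∀ τ : ℝ, (∀ n, 1 ≤ n → n ≤ N → t n - t (n - 1) ≤ τ) →
      ∀ (M : ℕ) (e : OrthonormalBasis (Fin M) ℝ H)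
        (α q : ℕ → Fin M → Polynomial ℝ),
        (∀ n ℓ, (α n ℓ).natDegree ≤ r) → (∀ n ℓ, (q n ℓ).natDegree ≤ r) →
        (∀ n ∈ Finset.Icc 1 N, ∀ ℓ : Fin M, ∀ p : Polynomial ℝ, p.natDegree ≤ r →
          (∫ s in (t (n - 1))..(t n),
            (T * Real.exp ((T - s) / T) * (α n ℓ).eval s - (q n ℓ).eval s) *
              p.eval s) = 0) →
      ∀ θ : ℝ, 0 < θ →
      ∀ u du v : ℕ → ℝ → H,
        (∀ n s, u n s = ∑ ℓ, (α n ℓ).eval s • e ℓ) →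
        (∀ n s, du n s = ∑ ℓ, ((α n ℓ).derivative).eval s • e ℓ) →
        (∀ n s, v n s = (∑ ℓ, (q n ℓ).eval s • e ℓ) + θ • u n s) →
        (∑ n ∈ Finset.Icc 1 N, ∫ s in (t (n - 1))..(t n), m (du n s) (v n s))
            - (∑ n ∈ Finset.Icc 1 (N - 1),
                m (u n (t n) - u (n + 1) (t n)) (v (n + 1) (t n)))
            + m (u 1 0) (v 1 0) ≥
          μs * ((1 / 2 - (μb / μs) ^ 2 * C * τ / (2 * θ)) *
              (∑ n ∈ Finset.Icc 1 N, ∫ s in (t (n - 1))..(t n), ‖u n s‖ ^ 2)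
            + T * ((1 / 2) * (‖u N T‖ ^ 2 +
                (∑ n ∈ Finset.Icc 1 (N - 1), ‖u n (t n) - u (n + 1) (t n)‖ ^ 2) +
                ‖u 1 0‖ ^ 2))) := by
  obtain ⟨K, hK, hinv⟩ := Polynomial.exists_sq_eval_le_integral r
  refine ⟨K * Real.exp 1 ^ 2, by positivity, ?_⟩
  intro H _ _ _ m hsym μs μb hμs hμsb hm T hT N hN t ht0 htN ht τ hτ M e α q hα hq horth θ hθ
    u du v hu hdu hv
  have hpart : ∀ n ∈ Finset.Icc 1 N, 0 ≤ t (n - 1) ∧ t (n - 1) < t n ∧ t n ≤ T := fun n hn => by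
    simpa only [ht0, htN] using partition_bounds ht hn
  have hjump := fun (γ : ℝ) (hγ : T + θ ≤ γ) =>
    m.upwind_jump_lower_bound hsym hμs hμsb hm hθ hT.le hγ
  -- the initial value is a jump from `0`, the final value a jump to `0`
  have hinit := hjump (expWeight T 0 + θ) (by linarith [le_expWeight hT hT.le]) 0 (u 1 0) (v 1 0)
  have hfinal := hjump (expWeight T T + θ) (by rw [expWeight_self]) (u N T) 0 0
  simp only [map_zero, zero_sub, norm_neg, smul_zero, sub_zero, norm_zero, map_neg,
    LinearMap.neg_apply] at hinit hfinal
  refine le_of_eq_of_le ?_ (upwind_sum_lower_bound hN (κ := μb ^ 2 / (2 * θ * μs))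
    (lam := K * Real.exp 1 ^ 2 * τ) (c := μs * T / 2) (jumpInit := ‖u 1 0‖ ^ 2)
    (jumpFinal := ‖u N T‖ ^ 2) (by positivity)
    (fun n hn => m.integral_apply₂_deriv_projection_add_smul e hsym (hα n) (horth n hn)
      (hu n) (hdu n) (hv n))
    (fun n hn => m.integral_norm_sq_le_integral_expWeight_div_mul hμs.le (fun x => (hm x).1) hT
      (hpart n hn).2.1.le (hpart n hn).2.2 (by rw [funext (hu n)]; exact continuous_polyCurve e _))
    (fun n hn => norm_sub_expWeight_add_smul_sq_le e (fun w hw => hinv w hw _ _ (hpart n hn).2.1)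
      hK.le hT (hpart n hn).1 (hpart n hn).2.1
      (hτ n (Finset.mem_Icc.mp hn).1 (Finset.mem_Icc.mp hn).2) (hα n) (hq n) (horth n hn)
      (hu n) (hv n))
    (fun n hn => hjump (expWeight T (t n) + θ)
      (by linarith [le_expWeight hT (hpart n (by simp at hn ⊢; omega)).2.2])
      (u n (t n)) (u (n + 1) (t n)) (v (n + 1) (t n)))
    (by simp only [Nat.sub_self, ht0]; linarith)
    (by rw [htN]; linarith))
  field_simp
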